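/- (Connectivity preserved along a sequence of safe moves.) Let P₀ ⊆ ℤ² be a finite set whose proximity graph is connected, and let P₀, P₁, …, P_m be a sequence of configurations such that for each k < m there exist p ∈ P_k and q ∉ P_k with P_{k+1} = (P_k \ {p}) ∪ {q} and every r ∈ P_k \ {p} at Chebyshev distance 1 from p is at Chebyshev distance 1 from q. Then the proximity graph of P_m is connected. -/

import Mathlib

/-- Chebyshev distance on the grid `ℤ²`. -/
def chebDist (p q : ℤ × ℤ) : ℤ := max |p.1 - q.1| |p.2 - q.2|

/-- The proximity graph of a configuration `P ⊆ ℤ²`: two occupied grid points are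
adjacent iff their Chebyshev distance is `1` (Moore neighborhood). -/
def proxGraph (P : Set (ℤ × ℤ)) : SimpleGraph P where
  Adj a b := chebDist a.1 b.1 = 1
  symm := by
    constructor
    intro a b h
    unfold chebDist at *
    rw [abs_sub_comm (b.1).1 (a.1).1, abs_sub_comm (b.1).2 (a.1).2]
    exact h
  loopless := by
    constructor
    intro a h
    simp [chebDist] at h

/-!
A safe move from `p` to `q` is the vertex map sending `p` to `q` and fixing every other
agent. Safety says exactly that this map is a graph homomorphism of proximity graphs, and
it is onto the new configuration, so it carries connectivity forward; induct on the moves.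
-/

variable {V : Type*} {Q : Set V} {p q : V}

namespace Set

def relocate (Q : Set V) (p q : V) [DecidableEq V] (a : Q) : ↥(Q \ {p} ∪ {q}) :=
  if h : (a : V) = p then ⟨q, Or.inr rfl⟩ else ⟨a, Or.inl ⟨a.2, h⟩⟩

lemma relocate_surjective [DecidableEq V] (hp : p ∈ Q) :
    Function.Surjective (relocate Q p q) := by
  rintro ⟨x, ⟨hxQ, hxp⟩ | rfl⟩
  · exact ⟨⟨x, hxQ⟩, dif_neg hxp⟩
  · exact ⟨⟨p, hp⟩, dif_pos rfl⟩

end Set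

namespace SimpleGraph

open Set

variable {G : SimpleGraph V}

lemma relocate_adj [DecidableEq V] (hsafe : ∀ r ∈ Q \ {p}, G.Adj r p → G.Adj r q)
    {a b : Q} (hab : (G.induce Q).Adj a b) :
    (G.induce (Q \ {p} ∪ {q})).Adj (relocate Q p q a) (relocate Q p q b) := by
  have hab : G.Adj a b := hab
  by_cases ha : (a : V) = p <;> by_cases hb : (b : V) = p
  · exact absurd (ha.trans hb.symm) hab.ne
  · simp only [relocate, ha, hb, dite_true, dite_false]
    exact (hsafe b ⟨b.2, hb⟩ (ha ▸ hab.symm)).symm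
  · simp only [relocate, ha, hb, dite_true, dite_false]
    exact hsafe a ⟨a.2, ha⟩ (hb ▸ hab)
  · simpa only [relocate, ha, hb, dite_false]

theorem Connected.induce_safe_move (hp : p ∈ Q)
    (hsafe : ∀ r ∈ Q \ {p}, G.Adj r p → G.Adj r q) (hQ : (G.induce Q).Connected) :
    (G.induce (Q \ {p} ∪ {q})).Connected := by
  classical
  exact hQ.map ⟨relocate Q p q, relocate_adj hsafe⟩ (relocate_surjective hp)

end SimpleGraph

lemma chebDist_comm (p q : ℤ × ℤ) : chebDist p q = chebDist q p := by
  rw [chebDist, chebDist, abs_sub_comm p.1, abs_sub_comm p.2]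

def mooreGraph : SimpleGraph (ℤ × ℤ) where
  Adj p q := chebDist p q = 1
  symm := ⟨fun p q h => (chebDist_comm q p).trans h⟩
  loopless := ⟨fun p h => by simp [chebDist] at h⟩

lemma proxGraph_eq_induce (P : Set (ℤ × ℤ)) : proxGraph P = mooreGraph.induce P := by
  ext
  rfl

theorem connected_after_safe_moves_general
    (P : ℕ → Set (ℤ × ℤ)) (m : ℕ)
    (hconn : (proxGraph (P 0)).Connected)
    (hstep : ∀ k < m, ∃ p ∈ P k, ∃ q ∉ P k,
      P (k + 1) = (P k \ {p}) ∪ {q} ∧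
      ∀ r ∈ P k \ {p}, chebDist r p = 1 → chebDist r q = 1) :
    (proxGraph (P m)).Connected := by
  induction m with
  | zero => exact hconn
  | succ n ih =>
    obtain ⟨p, hp, q, -, hnext, hsafe⟩ := hstep n n.lt_succ_self
    have hn : (proxGraph (P n)).Connected := ih fun k hk => hstep k (hk.trans n.lt_succ_self)
    rw [hnext, proxGraph_eq_induce]
    exact hn.induce_safe_move hp hsafe

/-- Connectivity is preserved along any sequence of safe moves: if `P 0` is a finite
connected configuration and each `P (k+1)` (for `k < m`) is obtained from `P k` by
relocating a single agent from `p` to an unoccupied point `q` that stays linked to all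
of `p`'s prior neighbors, then `P m` is connected. -/
theorem connected_after_safe_moves
    (P : ℕ → Set (ℤ × ℤ)) (m : ℕ)
    (hfin : (P 0).Finite)
    (hconn : (proxGraph (P 0)).Connected)
    (hstep : ∀ k < m, ∃ p ∈ P k, ∃ q ∉ P k,
      P (k + 1) = (P k \ {p}) ∪ {q} ∧
      ∀ r ∈ P k \ {p}, chebDist r p = 1 → chebDist r q = 1) :
    (proxGraph (P m)).Connected :=
  connected_after_safe_moves_general P m hconn hstep
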